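/- arXiv:2503.09240 — 8 statements merged into one kernel-verified Lean document; each statement's English description precedes it below -/
import Mathlib

section
/- Let F be a semi-skyline augmented filling of shape α with basement σ. If ℓ < r, α_ℓ ≥ α_r, 0 ≤ a ≤ α_r, and F(ℓ,a) < F(r,a), then F(ℓ,i) < F(r,i+1) for all 0 ≤ i ≤ a−1. -/
/-- A semi-skyline augmented filling of shape `α` with basement `σ`.
Entries are positive naturals; `σ i` as a value in `[n]` is `(σ i : ℕ) + 1`.
Conditions: positivity, basement, no descents, type A and type B inversion triples. -/
def IsSSAF (n : ℕ) (α : Fin n → ℕ) (σ : Equiv.Perm (Fin n)) (F : Fin n → ℕ → ℕ) : Prop :=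
  (∀ i j, j ≤ α i → 1 ≤ F i j) ∧
  (∀ i, F i 0 = (σ i : ℕ) + 1) ∧
  (∀ i j, j + 1 ≤ α i → F i (j + 1) ≤ F i j) ∧
  (∀ ℓ r : Fin n, ∀ i : ℕ, ℓ < r → α r ≤ α ℓ → i + 1 ≤ α r →
    ¬ (F ℓ (i + 1) ≤ F r (i + 1) ∧ F r (i + 1) ≤ F ℓ i)) ∧
  (∀ ℓ r : Fin n, ∀ i : ℕ, ℓ < r → α ℓ < α r → i ≤ α ℓ → i + 1 ≤ α r →
    ¬ (F r (i + 1) ≤ F ℓ i ∧ F ℓ i ≤ F r i))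

/-! The type A triple condition forbids `F(ℓ, i+1) ≤ F(r, i+1) ≤ F(ℓ, i)`, so a weak
inequality `F(ℓ, i+1) ≤ F(r, i+1)` forces `F(ℓ, i) < F(r, i+1) ≤ F(r, i)`, the last step
because column `r` has no descents. Hence `F(ℓ, a) < F(r, a)` propagates down to every row
`i ≤ a`, and one more use of the triple condition gives the claim. -/

namespace IsSSAF

variable {n : ℕ} {α : Fin n → ℕ} {σ : Equiv.Perm (Fin n)} {F : Fin n → ℕ → ℕ}
  {ℓ r : Fin n}

theorem lt_succ_of_le_succ (hF : IsSSAF n α σ F) (hlr : ℓ < r) (hα : α r ≤ α ℓ) {i : ℕ}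
    (hi : i + 1 ≤ α r) (h : F ℓ (i + 1) ≤ F r (i + 1)) : F ℓ i < F r (i + 1) :=
  lt_of_not_ge fun hge => hF.2.2.2.1 ℓ r i hlr hα hi ⟨h, hge⟩

theorem lt_of_lt_succ (hF : IsSSAF n α σ F) (hlr : ℓ < r) (hα : α r ≤ α ℓ) {i : ℕ}
    (hi : i + 1 ≤ α r) (h : F ℓ (i + 1) < F r (i + 1)) : F ℓ i < F r i :=
  (hF.lt_succ_of_le_succ hlr hα hi h.le).trans_le (hF.2.2.1 r i hi)

theorem lt_of_lt_of_le_row (hF : IsSSAF n α σ F) (hlr : ℓ < r) (hα : α r ≤ α ℓ) {a : ℕ}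
    (ha : a ≤ α r) (h : F ℓ a < F r a) {i : ℕ} (hi : i ≤ a) : F ℓ i < F r i := by
  induction hi using Nat.decreasingInduction with
  | self => exact h
  | of_succ k hk ih => exact hF.lt_of_lt_succ hlr hα (hk.trans_le ha) ih

end IsSSAF

theorem stmt0 (n : ℕ) (α : Fin n → ℕ) (σ : Equiv.Perm (Fin n)) (F : Fin n → ℕ → ℕ)
    (hF : IsSSAF n α σ F) (ℓ r : Fin n) (hlr : ℓ < r) (hα : α r ≤ α ℓ)
    (a : ℕ) (ha : a ≤ α r) (h : F ℓ a < F r a) :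
    ∀ i, i + 1 ≤ a → F ℓ i < F r (i + 1) := fun _ hi =>
  hF.lt_succ_of_le_succ hlr hα (hi.trans ha) (hF.lt_of_lt_of_le_row hlr hα ha h hi).le
end

section
/- Let F be a semi-skyline augmented filling of shape α with basement σ. If ℓ < r, α_ℓ ≥ α_r, 0 ≤ a ≤ α_r, and F(ℓ,a) > F(r,a), then F(ℓ,i) > F(r,i) for all a ≤ i ≤ α_r. -/
/-- Otherwise, as column `r` does not increase, the type A triple at row `i` would not be an
inversion triple. -/
theorem IsSSAF.lt_succ_of_lt {n : ℕ} {α : Fin n → ℕ} {σ : Equiv.Perm (Fin n)}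
    {F : Fin n → ℕ → ℕ} (hF : IsSSAF n α σ F) {ℓ r : Fin n} (hlr : ℓ < r) (hα : α r ≤ α ℓ)
    {i : ℕ} (hi : i + 1 ≤ α r) (h : F r i < F ℓ i) : F r (i + 1) < F ℓ (i + 1) := by
  obtain ⟨-, -, hdesc, hA, -⟩ := hF
  by_contra! hle
  exact hA ℓ r i hlr hα hi ⟨hle, ((hdesc r i hi).trans_lt h).le⟩

theorem stmt1_general (n : ℕ) (α : Fin n → ℕ) (σ : Equiv.Perm (Fin n)) (F : Fin n → ℕ → ℕ)
    (hF : IsSSAF n α σ F) (ℓ r : Fin n) (hlr : ℓ < r) (hα : α r ≤ α ℓ)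
    (a : ℕ) (h : F r a < F ℓ a) :
    ∀ i, a ≤ i → i ≤ α r → F r i < F ℓ i := by
  intro i hai
  induction i, hai using Nat.le_induction with
  | base => exact fun _ ↦ h
  | succ k _ ih =>
    exact fun hk ↦ hF.lt_succ_of_lt hlr hα hk (ih (Nat.le_of_succ_le hk))

theorem stmt1 (n : ℕ) (α : Fin n → ℕ) (σ : Equiv.Perm (Fin n)) (F : Fin n → ℕ → ℕ)
    (hF : IsSSAF n α σ F) (ℓ r : Fin n) (hlr : ℓ < r) (hα : α r ≤ α ℓ)
    (a : ℕ) (ha : a ≤ α r) (h : F r a < F ℓ a) :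
    ∀ i, a ≤ i → i ≤ α r → F r i < F ℓ i :=
  stmt1_general n α σ F hF ℓ r hlr hα a h
end

section
/- Let F be a semi-skyline augmented filling of shape α with basement σ. If ℓ < r, α_ℓ < α_r, 0 ≤ a ≤ α_ℓ, and F(ℓ,a) < F(r,a), then F(ℓ,i) < F(r,i+1) for all a ≤ i ≤ α_ℓ. -/
namespace IsSSAF

variable {n : ℕ} {α : Fin n → ℕ} {σ : Equiv.Perm (Fin n)} {F : Fin n → ℕ → ℕ}

theorem apply_succ_le (hF : IsSSAF n α σ F) {i : Fin n} {j : ℕ} (hj : j + 1 ≤ α i) :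
    F i (j + 1) ≤ F i j :=
  hF.2.2.1 i j hj

theorem lt_apply_succ_of_le (hF : IsSSAF n α σ F) {ℓ r : Fin n} (hlr : ℓ < r)
    (hα : α ℓ < α r) {i : ℕ} (hi : i ≤ α ℓ) (hle : F ℓ i ≤ F r i) :
    F ℓ i < F r (i + 1) := by
  have hB := hF.2.2.2.2 ℓ r i hlr hα hi (by omega)
  omega

end IsSSAF

theorem stmt2_general (n : ℕ) (α : Fin n → ℕ) (σ : Equiv.Perm (Fin n)) (F : Fin n → ℕ → ℕ)
    (hF : IsSSAF n α σ F) (ℓ r : Fin n) (hlr : ℓ < r) (hα : α ℓ < α r)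
    (a : ℕ) (h : F ℓ a < F r a) :
    ∀ i, a ≤ i → i ≤ α ℓ → F ℓ i < F r (i + 1) := by
  intro i hai hi
  induction i, hai using Nat.le_induction with
  | base => exact hF.lt_apply_succ_of_le hlr hα hi h.le
  | succ k _ ih =>
    have hk : F ℓ k < F r (k + 1) := ih (by omega)
    exact hF.lt_apply_succ_of_le hlr hα hi ((hF.apply_succ_le hi).trans hk.le)

theorem stmt2 (n : ℕ) (α : Fin n → ℕ) (σ : Equiv.Perm (Fin n)) (F : Fin n → ℕ → ℕ)
    (hF : IsSSAF n α σ F) (ℓ r : Fin n) (hlr : ℓ < r) (hα : α ℓ < α r)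
    (a : ℕ) (ha : a ≤ α ℓ) (h : F ℓ a < F r a) :
    ∀ i, a ≤ i → i ≤ α ℓ → F ℓ i < F r (i + 1) :=
  stmt2_general n α σ F hF ℓ r hlr hα a h
end

section
/- Let F be a semi-skyline augmented filling of shape α with basement σ. If ℓ < r, α_ℓ < α_r, 0 ≤ a ≤ α_ℓ, and F(ℓ,a) > F(r,a), then F(ℓ,i) > F(r,i) for all 0 ≤ i ≤ a. -/
theorem IsSSAF.lt_of_lt_succ_s3 {n : ℕ} {α : Fin n → ℕ} {σ : Equiv.Perm (Fin n)}
    {F : Fin n → ℕ → ℕ} (hF : IsSSAF n α σ F) {ℓ r : Fin n} (hlr : ℓ < r) (hα : α ℓ < α r)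
    {i : ℕ} (hi : i + 1 ≤ α ℓ) (h : F r (i + 1) < F ℓ (i + 1)) : F r i < F ℓ i := by
  obtain ⟨-, -, hdesc, -, htypeB⟩ := hF
  have hstep : F r (i + 1) ≤ F ℓ i := h.le.trans (hdesc ℓ i hi)
  by_contra! hle
  exact htypeB ℓ r i hlr hα (by omega) (by omega) ⟨hstep, hle⟩

theorem stmt3 (n : ℕ) (α : Fin n → ℕ) (σ : Equiv.Perm (Fin n)) (F : Fin n → ℕ → ℕ)
    (hF : IsSSAF n α σ F) (ℓ r : Fin n) (hlr : ℓ < r) (hα : α ℓ < α r)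
    (a : ℕ) (ha : a ≤ α ℓ) (h : F r a < F ℓ a) :
    ∀ i, i ≤ a → F r i < F ℓ i := by
  intro i hi
  induction hi using Nat.decreasingInduction with
  | self => exact h
  | of_succ k hk ih => exact hF.lt_of_lt_succ_s3 hlr hα (by omega) ih
end

section
/- Let F be an SSAF of shape α with basement σ, and let F' be the filling obtained from F by deleting all cells with entry 1 other than the basement cell. Let β be the shape of F'. Then for every pair ℓ < r with α_ℓ ≥ α_r and β_ℓ ≥ β_r, we have α_r ≤ β_ℓ. -/
/-- The shape obtained by deleting all non-basement cells with entry `1`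
(entries weakly decrease up a column, so such cells sit at the top):
`shapeDel α F i` is the number of non-basement cells of column `i` with entry at least `2`. -/
def shapeDel (n : ℕ) (α : Fin n → ℕ) (F : Fin n → ℕ → ℕ) (i : Fin n) : ℕ :=
  ((Finset.Icc 1 (α i)).filter (fun j => 2 ≤ F i j)).card

/-!
Entries weakly decrease up each column, so in column `c` the cells above height
`β c = shapeDel n α F c` all carry the entry `1`. If `α r > β ℓ`, then row `β ℓ + 1` has a `1` in column `ℓ`
and (as `β r ≤ β ℓ`) in column `r`, and these two cells together with the cell of column `ℓ`
just below form a type A coinversion triple.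
-/

section Column

variable {n : ℕ} {α : Fin n → ℕ} {F : Fin n → ℕ → ℕ} {c : Fin n}

lemma antitoneOn_column (hd : ∀ j, j + 1 ≤ α c → F c (j + 1) ≤ F c j) :
    AntitoneOn (F c) (Set.Iic (α c)) :=
  antitoneOn_of_succ_le Set.ordConnected_Iic fun j _ _ hj => hd j hj

lemma le_shapeDel (hd : ∀ j, j + 1 ≤ α c → F c (j + 1) ≤ F c j) {j : ℕ}
    (hjα : j ≤ α c) (hF : 2 ≤ F c j) : j ≤ shapeDel n α F c := by
  have hsub : Finset.Icc 1 j ⊆ (Finset.Icc 1 (α c)).filter (fun k => 2 ≤ F c k) := by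
    intro k hk
    rw [Finset.mem_Icc] at hk
    rw [Finset.mem_filter, Finset.mem_Icc]
    exact ⟨⟨hk.1, hk.2.trans hjα⟩,
      hF.trans (antitoneOn_column hd (hk.2.trans hjα) hjα hk.2)⟩
  simpa [shapeDel] using Finset.card_le_card hsub

lemma eq_one_of_shapeDel_lt (hpos : ∀ j, j ≤ α c → 1 ≤ F c j)
    (hd : ∀ j, j + 1 ≤ α c → F c (j + 1) ≤ F c j) {j : ℕ}
    (hj : shapeDel n α F c < j) (hjα : j ≤ α c) : F c j = 1 := by
  have : F c j < 2 := lt_of_not_ge fun h2 => hj.not_ge (le_shapeDel hd hjα h2)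
  have := hpos j hjα
  omega

end Column

theorem stmt4 (n : ℕ) (α : Fin n → ℕ) (σ : Equiv.Perm (Fin n)) (F : Fin n → ℕ → ℕ)
    (hF : IsSSAF n α σ F) (ℓ r : Fin n) (hlr : ℓ < r) (hα : α r ≤ α ℓ)
    (hβ : shapeDel n α F r ≤ shapeDel n α F ℓ) :
    α r ≤ shapeDel n α F ℓ := by
  obtain ⟨hpos, -, hd, hA, -⟩ := hF
  by_contra! h
  set b := shapeDel n α F ℓ
  have hℓ : F ℓ (b + 1) = 1 :=
    eq_one_of_shapeDel_lt (hpos ℓ) (hd ℓ) (Nat.lt_succ_self b) (h.trans_le hα)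
  have hr : F r (b + 1) = 1 :=
    eq_one_of_shapeDel_lt (hpos r) (hd r) (Nat.lt_succ_of_le hβ) h
  exact hA ℓ r b hlr hα h ⟨(hℓ.trans hr.symm).le, hr.trans_le (hpos ℓ b (by omega))⟩
end

section
/- If F is an SSAF of shape α with basement σ and β is the shape obtained by deleting all non-basement 1-cells from F, then β is σ-extendable to α. -/
/-- `β` is `σ`-extendable to `α` (Definition 3.3). -/
def SigmaExtendable (n : ℕ) (σ : Equiv.Perm (Fin n)) (β α : Fin n → ℕ) : Prop :=
  (∀ i, β i ≤ α i) ∧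
  ∀ ℓ r : Fin n, ℓ < r →
    (α r ≤ α ℓ → β r ≤ β ℓ → α r ≤ β ℓ) ∧
    (α ℓ < α r → β ℓ < β r → α ℓ < β r) ∧
    (α r ≤ α ℓ → β ℓ < β r → α r = β r ∧ (σ ℓ : ℕ) < (σ r : ℕ)) ∧
    (α ℓ < α r → β r ≤ β ℓ → α ℓ = β ℓ ∧ (σ r : ℕ) < (σ ℓ : ℕ))

open Finset

theorem le_card_filter_Icc_iff {P : ℕ → Prop} [DecidablePred P] {a j : ℕ}
    (hP : ∀ j k, 1 ≤ j → j ≤ k → k ≤ a → P k → P j) (hj : 1 ≤ j) (hja : j ≤ a) :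
    j ≤ #{k ∈ Icc 1 a | P k} ↔ P j := by
  constructor
  · intro hcard
    by_contra hPj
    have hsub : {k ∈ Icc 1 a | P k} ⊆ Icc 1 (j - 1) := by
      intro k hk
      simp only [mem_filter, mem_Icc] at hk ⊢
      refine ⟨hk.1.1, Nat.le_sub_one_of_lt (lt_of_not_ge fun hjk => hPj ?_)⟩
      exact hP j k hj hjk hk.1.2 hk.2
    have := card_le_card hsub
    simp only [Nat.card_Icc] at this
    omega
  · intro hPj
    have hsub : Icc 1 j ⊆ {k ∈ Icc 1 a | P k} := by
      intro k hk
      simp only [mem_filter, mem_Icc] at hk ⊢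
      exact ⟨⟨hk.1, hk.2.trans hja⟩, hP k j hk.1 hk.2 hja hPj⟩
    simpa using card_le_card hsub

theorem shapeDel_le (n : ℕ) (α : Fin n → ℕ) (F : Fin n → ℕ → ℕ) (i : Fin n) :
    shapeDel n α F i ≤ α i := by
  simpa [shapeDel] using card_filter_le (Icc 1 (α i)) fun j => 2 ≤ F i j

namespace IsSSAF

variable {n : ℕ} {α : Fin n → ℕ} {σ : Equiv.Perm (Fin n)} {F : Fin n → ℕ → ℕ} {i ℓ r : Fin n}
  {j k : ℕ}

theorem antitoneOn (hF : IsSSAF n α σ F) (i : Fin n) : AntitoneOn (F i) (Set.Iic (α i)) :=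
  antitoneOn_of_add_one_le Set.ordConnected_Iic fun j _ _ hj => hF.2.2.1 i j hj

theorem le_shapeDel_iff (hF : IsSSAF n α σ F) (hj : 1 ≤ j) (hjα : j ≤ α i) :
    j ≤ shapeDel n α F i ↔ 2 ≤ F i j :=
  le_card_filter_Icc_iff (fun _ _ _ hjk hk h => h.trans (hF.antitoneOn i (hjk.trans hk) hk hjk))
    hj hjα

theorem eq_one_of_shapeDel_lt (hF : IsSSAF n α σ F) (hj : shapeDel n α F i < j)
    (hjα : j ≤ α i) : F i j = 1 := by
  have := hF.le_shapeDel_iff (i := i) (by omega) hjα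
  have := hF.1 i j hjα
  omega

theorem le_shapeDel_or_eq_shapeDel (hF : IsSSAF n α σ F) (hlr : ℓ < r) (hα : α r ≤ α ℓ) :
    α r ≤ shapeDel n α F ℓ ∨ α r = shapeDel n α F r := by
  by_contra! h
  have hr := shapeDel_le n α F r
  have h1 := hF.eq_one_of_shapeDel_lt (i := ℓ) (j := α r - 1 + 1) (by omega) (by omega)
  have h2 := hF.eq_one_of_shapeDel_lt (i := r) (j := α r - 1 + 1) (by omega) (by omega)
  have h3 := hF.1 ℓ (α r - 1) (by omega)
  exact hF.2.2.2.1 ℓ r (α r - 1) hlr hα (by omega) (by omega)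

theorem eq_shapeDel_or_lt_shapeDel (hF : IsSSAF n α σ F) (hlr : ℓ < r) (hα : α ℓ < α r) :
    α ℓ = shapeDel n α F ℓ ∨ α ℓ < shapeDel n α F r := by
  by_contra! h
  have hl := shapeDel_le n α F ℓ
  have h1 := hF.eq_one_of_shapeDel_lt (i := ℓ) (j := α ℓ) (by omega) le_rfl
  have h2 := hF.eq_one_of_shapeDel_lt (i := r) (j := α ℓ + 1) (by omega) (by omega)
  have h3 := hF.1 r (α ℓ) (by omega)
  exact hF.2.2.2.2 ℓ r (α ℓ) hlr hα le_rfl (by omega) (by omega)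

theorem lt_of_typeA (hF : IsSSAF n α σ F) (hlr : ℓ < r) (hα : α r ≤ α ℓ) (hk : k + 1 ≤ α r)
    (hle : F ℓ (k + 1) ≤ F r (k + 1)) : F ℓ k < F r (k + 1) :=
  lt_of_not_ge fun h => hF.2.2.2.1 ℓ r k hlr hα hk ⟨hle, h⟩

theorem basement_lt_of_typeA (hF : IsSSAF n α σ F) (hlr : ℓ < r) (hα : α r ≤ α ℓ)
    (hk : k + 1 ≤ α r) (hle : F ℓ (k + 1) ≤ F r (k + 1)) : F ℓ 0 < F r 0 := by
  induction k with
  | zero => exact (hF.lt_of_typeA hlr hα hk hle).trans_le (hF.2.2.1 r 0 hk)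
  | succ k ih =>
    exact ih (by omega) ((hF.lt_of_typeA hlr hα hk hle).le.trans (hF.2.2.1 r (k + 1) hk))

theorem lt_of_typeB (hF : IsSSAF n α σ F) (hlr : ℓ < r) (hα : α ℓ < α r) (hk : k ≤ α ℓ)
    (hle : F r (k + 1) ≤ F ℓ k) : F r k < F ℓ k :=
  lt_of_not_ge fun h => hF.2.2.2.2 ℓ r k hlr hα hk (by omega) ⟨hle, h⟩

theorem basement_lt_of_typeB (hF : IsSSAF n α σ F) (hlr : ℓ < r) (hα : α ℓ < α r)
    (hk : k ≤ α ℓ) (hle : F r (k + 1) ≤ F ℓ k) : F r 0 < F ℓ 0 := by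
  induction k with
  | zero => exact hF.lt_of_typeB hlr hα hk hle
  | succ k ih =>
    exact ih (by omega) ((hF.lt_of_typeB hlr hα hk hle).le.trans (hF.2.2.1 ℓ k hk))

theorem sigma_lt_of_typeA (hF : IsSSAF n α σ F) (hlr : ℓ < r) (hα : α r ≤ α ℓ)
    (hβ : shapeDel n α F ℓ < shapeDel n α F r) : (σ ℓ : ℕ) < σ r := by
  have hr := shapeDel_le n α F r
  have h1 := hF.eq_one_of_shapeDel_lt (i := ℓ) (j := shapeDel n α F ℓ + 1) (by omega) (by omega)
  have h2 := hF.1 r (shapeDel n α F ℓ + 1) (by omega)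
  simpa [hF.2.1] using hF.basement_lt_of_typeA hlr hα (by omega) (h1.trans_le h2)

theorem sigma_lt_of_typeB (hF : IsSSAF n α σ F) (hlr : ℓ < r) (hα : α ℓ < α r)
    (hβ : shapeDel n α F r ≤ shapeDel n α F ℓ) : (σ r : ℕ) < σ ℓ := by
  have hl := shapeDel_le n α F ℓ
  have h1 := hF.eq_one_of_shapeDel_lt (i := r) (j := α ℓ + 1) (by omega) (by omega)
  have h2 := hF.1 ℓ (α ℓ) le_rfl
  simpa [hF.2.1] using hF.basement_lt_of_typeB hlr hα le_rfl (h1.trans_le h2)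

end IsSSAF

theorem stmt7 (n : ℕ) (α : Fin n → ℕ) (σ : Equiv.Perm (Fin n)) (F : Fin n → ℕ → ℕ)
    (hF : IsSSAF n α σ F) :
    SigmaExtendable n σ (shapeDel n α F) α := by
  refine ⟨shapeDel_le n α F, fun ℓ r hlr => ⟨fun hα hβ => ?_, fun hα hβ => ?_,
    fun hα hβ => ⟨?_, hF.sigma_lt_of_typeA hlr hα hβ⟩,
    fun hα hβ => ⟨?_, hF.sigma_lt_of_typeB hlr hα hβ⟩⟩⟩
  · have := hF.le_shapeDel_or_eq_shapeDel hlr hα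
    omega
  · have := hF.eq_shapeDel_or_lt_shapeDel hlr hα
    omega
  · have := hF.le_shapeDel_or_eq_shapeDel hlr hα
    have := shapeDel_le n α F r
    omega
  · have := hF.eq_shapeDel_or_lt_shapeDel hlr hα
    have := shapeDel_le n α F ℓ
    omega
end

section
/- Suppose β is σ-extendable to α and F' is an SSAF of shape β with basement σ whose only cells with entry 1 are in the basement. Let F be the filling obtained from F' by adding α_i − β_i cells with entry 1 on top of column i for each i. Then F is an SSAF of shape α with basement σ. -/
/-!
Off the basement every entry of `F'` is at least `2`, while every added cell holds `1`. So a
triple mixing old and new cells compares a `1` with an entry `≥ 2` and is automatically an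
inversion triple, except where σ-extendability makes the comparison one between two old columns.
There σ-extendability also fixes the order of the two basement entries, and the inversion
triples of `F'` propagate that strict order up the two columns row by row.
-/

section padOnes

variable {n : ℕ} {σ : Equiv.Perm (Fin n)} {α β : Fin n → ℕ} {F : Fin n → ℕ → ℕ}

def padOnes (β : Fin n → ℕ) (F : Fin n → ℕ → ℕ) : Fin n → ℕ → ℕ :=
  fun i j => if j ≤ β i then F i j else 1

theorem padOnes_of_le {i : Fin n} {j : ℕ} (h : j ≤ β i) : padOnes β F i j = F i j :=
  if_pos h

theorem padOnes_of_lt {i : Fin n} {j : ℕ} (h : β i < j) : padOnes β F i j = 1 :=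
  if_neg (Nat.not_le.mpr h)

namespace IsSSAF

theorem one_le_padOnes (hF : IsSSAF n β σ F) (i : Fin n) (j : ℕ) : 1 ≤ padOnes β F i j := by
  rcases Nat.lt_or_ge (β i) j with h | h
  · exact (padOnes_of_lt h).ge
  · exact (padOnes_of_le h).symm ▸ hF.1 i j h

theorem padOnes_succ_le (hF : IsSSAF n β σ F) (i : Fin n) (j : ℕ) :
    padOnes β F i (j + 1) ≤ padOnes β F i j := by
  rcases Nat.lt_or_ge (β i) (j + 1) with h | h
  · exact (padOnes_of_lt h).trans_le (hF.one_le_padOnes i j)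
  · rw [padOnes_of_le h, padOnes_of_le (Nat.le_of_succ_le h)]
    exact hF.2.2.1 i j h

theorem two_le_of_ne_one (hF : IsSSAF n β σ F) (h1 : ∀ i j, 1 ≤ j → j ≤ β i → F i j ≠ 1)
    {i : Fin n} {j : ℕ} (hj : 1 ≤ j) (hji : j ≤ β i) : 2 ≤ F i j := by
  have := hF.1 i j hji
  have := h1 i j hj hji
  omega

theorem lt_of_left_shorter (hF : IsSSAF n β σ F) {ℓ r : Fin n} (hlr : ℓ < r)
    (hβ : β ℓ < β r) (hσ : (σ ℓ : ℕ) < σ r) {j : ℕ} (hj : j ≤ β ℓ) : F ℓ j < F r j := by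
  obtain ⟨-, hbase, hdesc, -, hB⟩ := hF
  induction j with
  | zero => rw [hbase, hbase]; omega
  | succ j ih =>
    have hprev := ih (by omega)
    have hB := hB ℓ r j hlr hβ (by omega) (by omega)
    have := hdesc ℓ j (by omega)
    omega

theorem lt_succ_of_left_shorter (hF : IsSSAF n β σ F) {ℓ r : Fin n} (hlr : ℓ < r)
    (hβ : β ℓ < β r) (hσ : (σ ℓ : ℕ) < σ r) {j : ℕ} (hj : j ≤ β ℓ) : F ℓ j < F r (j + 1) := by
  have hrow := hF.lt_of_left_shorter hlr hβ hσ hj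
  have hB := hF.2.2.2.2 ℓ r j hlr hβ hj (by omega)
  omega

theorem lt_of_right_shorter (hF : IsSSAF n β σ F) {ℓ r : Fin n} (hlr : ℓ < r)
    (hβ : β r ≤ β ℓ) (hσ : (σ r : ℕ) < σ ℓ) {j : ℕ} (hj : j ≤ β r) : F r j < F ℓ j := by
  obtain ⟨-, hbase, hdesc, hA, -⟩ := hF
  induction j with
  | zero => rw [hbase, hbase]; omega
  | succ j ih =>
    have hprev := ih (by omega)
    have hA := hA ℓ r j hlr hβ hj
    have := hdesc r j hj
    omega

variable (hext : SigmaExtendable n σ β α) (hF : IsSSAF n β σ F)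
  (h1 : ∀ i j, 1 ≤ j → j ≤ β i → F i j ≠ 1)
include hext hF h1

theorem padOnes_typeA_inversion {ℓ r : Fin n} {i : ℕ} (hlr : ℓ < r) (hα : α r ≤ α ℓ) (hi : i + 1 ≤ α r) :
    ¬ (padOnes β F ℓ (i + 1) ≤ padOnes β F r (i + 1) ∧
      padOnes β F r (i + 1) ≤ padOnes β F ℓ i) := by
  obtain ⟨c1, -, c3, -⟩ := hext.2 ℓ r hlr
  rintro ⟨hup, hdown⟩
  rcases Nat.lt_or_ge (β r) (i + 1) with hr | hr
  · have hℓ : i + 1 ≤ β ℓ := by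
      rcases Nat.lt_or_ge (β ℓ) (β r) with hβ | hβ
      · omega
      · exact (c1 hα hβ).trans' hi
    rw [padOnes_of_lt hr, padOnes_of_le hℓ] at hup
    have := hF.two_le_of_ne_one h1 (by omega) hℓ
    omega
  rw [padOnes_of_le hr] at hup hdown
  rcases Nat.lt_or_ge (β ℓ) (β r) with hβ | hβ
  · have hσ := (c3 hα hβ).2
    have hr2 := hF.two_le_of_ne_one h1 (by omega) hr
    rcases Nat.lt_or_ge (β ℓ) i with hℓ | hℓ
    · rw [padOnes_of_lt hℓ] at hdown
      omega
    · rw [padOnes_of_le hℓ] at hdown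
      have := hF.lt_succ_of_left_shorter hlr hβ hσ hℓ
      omega
  · have hℓ : i + 1 ≤ β ℓ := hr.trans hβ
    rw [padOnes_of_le hℓ] at hup
    rw [padOnes_of_le (Nat.le_of_succ_le hℓ)] at hdown
    exact hF.2.2.2.1 ℓ r i hlr hβ hr ⟨hup, hdown⟩

theorem padOnes_typeB_inversion {ℓ r : Fin n} {i : ℕ} (hlr : ℓ < r) (hα : α ℓ < α r) (hi : i ≤ α ℓ) :
    ¬ (padOnes β F r (i + 1) ≤ padOnes β F ℓ i ∧ padOnes β F ℓ i ≤ padOnes β F r i) := by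
  obtain ⟨-, c2, -, c4⟩ := hext.2 ℓ r hlr
  rintro ⟨hup, hdown⟩
  rcases Nat.lt_or_ge (β ℓ) (β r) with hβ | hβ
  · have hr : i + 1 ≤ β r := by have := c2 hα hβ; omega
    rw [padOnes_of_le hr] at hup
    rw [padOnes_of_le (Nat.le_of_succ_le hr)] at hdown
    rcases Nat.lt_or_ge (β ℓ) i with hℓ | hℓ
    · rw [padOnes_of_lt hℓ] at hup
      have := hF.two_le_of_ne_one h1 (by omega) hr
      omega
    · rw [padOnes_of_le hℓ] at hup hdown
      exact hF.2.2.2.2 ℓ r i hlr hβ hℓ hr ⟨hup, hdown⟩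
  · obtain ⟨hαℓ, hσ⟩ := c4 hα hβ
    have hℓ : i ≤ β ℓ := by omega
    rw [padOnes_of_le hℓ] at hdown
    rcases Nat.lt_or_ge (β r) i with hr | hr
    · rw [padOnes_of_lt hr] at hdown
      have := hF.two_le_of_ne_one h1 (by omega) hℓ
      omega
    · rw [padOnes_of_le hr] at hdown
      have := hF.lt_of_right_shorter hlr hβ hσ hr
      omega

end IsSSAF

end padOnes

theorem stmt8 (n : ℕ) (σ : Equiv.Perm (Fin n)) (α β : Fin n → ℕ)
    (hext : SigmaExtendable n σ β α) (F' : Fin n → ℕ → ℕ)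
    (hF' : IsSSAF n β σ F')
    (h1 : ∀ i j, 1 ≤ j → j ≤ β i → F' i j ≠ 1) :
    IsSSAF n α σ (fun i j => if j ≤ β i then F' i j else 1) := by
  change IsSSAF n α σ (padOnes β F')
  exact ⟨fun i j _ => hF'.one_le_padOnes i j,
    fun i => (padOnes_of_le (Nat.zero_le _)).trans (hF'.2.1 i),
    fun i j _ => hF'.padOnes_succ_le i j,
    fun _ _ _ => hF'.padOnes_typeA_inversion hext h1,
    fun _ _ _ hlr hα hi _ => hF'.padOnes_typeB_inversion hext h1 hlr hα hi⟩
end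

section
/- For a weak composition α of length n and σ ∈ S_n, the permuted-basement Demazure atom satisfies the decomposition 𝒜_α^σ(x_1,...,x_n) = Σ_β x_1^{|α|−|β|} · 𝒜_β^σ(0, x_2, ..., x_n), where the sum ranges over all weak compositions β that are σ-extendable to α. -/
/-- The set of SSAFs of shape `α` with basement `σ`, with fillings normalized
to be `0` outside the cells of the diagram. -/
def SSAFSet (n : ℕ) (α : Fin n → ℕ) (σ : Equiv.Perm (Fin n)) : Set (Fin n → ℕ → ℕ) :=
  {F | IsSSAF n α σ F ∧ ∀ i j, α i < j → F i j = 0}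

/-- The permuted-basement Demazure atom `𝒜_α^σ`, as a sum of monomial weights
over SSAFs of shape `α` with basement `σ`; `x j` is the variable `x_j`. -/
noncomputable def atomSum (n : ℕ) (α : Fin n → ℕ) (σ : Equiv.Perm (Fin n)) (x : ℕ → ℝ) : ℝ :=
  ∑ᶠ F ∈ SSAFSet n α σ, ∏ i : Fin n, ∏ j ∈ Finset.Icc 1 (α i), x (F i j)

/-!
In an SSAF the columns weakly decrease and every entry is positive, so the entries equal to `1`
sit at the top of each column. Deleting them leaves an SSAF of a smaller shape `β` without
entries `1`, and the inversion-triple conditions force `β` to be `σ`-extendable to `α`.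
Conversely, padding a `1`-free SSAF of a `σ`-extendable shape `β` with `1`s up to `α` gives an
SSAF of shape `α`. Setting `x₁ = 0` in `𝒜_β^σ` keeps exactly the `1`-free fillings, and the
deleted `1`s contribute `x₁ ^ (|α| - |β|)`.
-/

open Finset

variable {n : ℕ} {α β : Fin n → ℕ} {σ : Equiv.Perm (Fin n)} {F G : Fin n → ℕ → ℕ}

/-- The shape left after deleting the `1`s, which sit on top of the columns of an SSAF. -/
def shapeWithoutOnes (α : Fin n → ℕ) (F : Fin n → ℕ → ℕ) : Fin n → ℕ :=
  fun i ↦ Nat.findGreatest (fun j ↦ 2 ≤ F i j) (α i)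

theorem shapeWithoutOnes_le (α : Fin n → ℕ) (F : Fin n → ℕ → ℕ) (i : Fin n) :
    shapeWithoutOnes α F i ≤ α i :=
  Nat.findGreatest_le _

namespace IsSSAF

variable {ℓ r : Fin n}

theorem antitone_col (hF : IsSSAF n α σ F) (i : Fin n) {j k : ℕ} (hjk : j ≤ k) (hk : k ≤ α i) :
    F i k ≤ F i j := by
  induction k, hjk using Nat.le_induction with
  | base => exact le_rfl
  | succ k _ ih => exact (hF.2.2.1 i k hk).trans (ih (by omega))

theorem typeA (hF : IsSSAF n α σ F) (hlr : ℓ < r) (hα : α r ≤ α ℓ) {i : ℕ} (hi : i + 1 ≤ α r) :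
    F r (i + 1) < F ℓ (i + 1) ∨ F ℓ i < F r (i + 1) := by
  have := hF.2.2.2.1 ℓ r i hlr hα hi
  omega

theorem typeB (hF : IsSSAF n α σ F) (hlr : ℓ < r) (hα : α ℓ < α r) {i : ℕ} (hi : i ≤ α ℓ)
    (hi' : i + 1 ≤ α r) : F ℓ i < F r (i + 1) ∨ F r i < F ℓ i := by
  have := hF.2.2.2.2 ℓ r i hlr hα hi hi'
  omega

theorem lt_of_basement_lt_of_le (hF : IsSSAF n α σ F) (hlr : ℓ < r) (hα : α r ≤ α ℓ)
    (h0 : F r 0 < F ℓ 0) : ∀ j ≤ α r, F r j < F ℓ j := by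
  intro j hj
  induction j with
  | zero => exact h0
  | succ j ih =>
    have := ih (by omega)
    have := hF.antitone_col r (Nat.le_add_right j 1) hj
    have := hF.typeA hlr hα hj
    omega

theorem lt_succ_of_basement_lt_of_lt (hF : IsSSAF n α σ F) (hlr : ℓ < r) (hα : α ℓ < α r)
    (h0 : F ℓ 0 < F r 0) : ∀ j ≤ α ℓ, F ℓ j < F r (j + 1) := by
  intro j hj
  induction j with
  | zero =>
    have := hF.typeB hlr hα (Nat.zero_le _) (by omega)
    omega
  | succ j ih =>
    have := ih (by omega)
    have := hF.antitone_col ℓ (Nat.le_add_right j 1) hj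
    have := hF.typeB hlr hα hj (by omega)
    omega

theorem lt_succ_of_lt_of_le (hF : IsSSAF n α σ F) (hlr : ℓ < r) (hα : α r ≤ α ℓ) {p : ℕ}
    (hp : p + 1 ≤ α r) (htop : F ℓ (p + 1) < F r (p + 1)) : ∀ i ≤ p, F ℓ i < F r (i + 1) := by
  intro i hi
  induction hi using Nat.decreasingInduction with
  | self =>
    have := hF.typeA hlr hα hp
    omega
  | of_succ k _ ih =>
    have := hF.antitone_col r (Nat.le_add_right (k + 1) 1) (by omega)
    have := hF.typeA hlr hα (i := k) (by omega)
    omega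

theorem lt_of_succ_le_of_lt (hF : IsSSAF n α σ F) (hlr : ℓ < r) (hα : α ℓ < α r) {q : ℕ}
    (hq : q ≤ α ℓ) (htop : F r (q + 1) ≤ F ℓ q) : ∀ i ≤ q, F r i < F ℓ i := by
  intro i hi
  induction hi using Nat.decreasingInduction with
  | self =>
    have := hF.typeB hlr hα hq (by omega)
    omega
  | of_succ k _ ih =>
    have := hF.antitone_col ℓ (Nat.le_add_right k 1) (by omega)
    have := hF.typeB hlr hα (i := k) (by omega) (by omega)
    omega

theorem two_le_of_le_shapeWithoutOnes (hF : IsSSAF n α σ F) {i : Fin n} {j : ℕ} (h1 : 1 ≤ j)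
    (h2 : j ≤ shapeWithoutOnes α F i) : 2 ≤ F i j :=
  (Nat.findGreatest_of_ne_zero (P := fun j ↦ 2 ≤ F i j)
    (m := shapeWithoutOnes α F i) rfl (by omega)).trans
    (hF.antitone_col i h2 (shapeWithoutOnes_le α F i))

theorem eq_one_of_shapeWithoutOnes_lt (hF : IsSSAF n α σ F) {i : Fin n} {j : ℕ}
    (h1 : shapeWithoutOnes α F i < j) (h2 : j ≤ α i) : F i j = 1 := by
  have := Nat.findGreatest_is_greatest h1 h2
  have := hF.1 i j h2
  omega

theorem basement_lt_of_shapeWithoutOnes_lt (hF : IsSSAF n α σ F) (hlr : ℓ < r)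
    (hα : α r ≤ α ℓ) (hb : shapeWithoutOnes α F ℓ < shapeWithoutOnes α F r) :
    (σ ℓ : ℕ) < σ r := by
  have := shapeWithoutOnes_le α F r
  -- the `1` on top of column `ℓ` faces an entry `≥ 2` of column `r`
  have := hF.lt_succ_of_lt_of_le hlr hα (p := shapeWithoutOnes α F ℓ) (by omega) (by
    rw [hF.eq_one_of_shapeWithoutOnes_lt (lt_add_one _) (by omega)]
    exact hF.two_le_of_le_shapeWithoutOnes (by omega) hb) 0 (Nat.zero_le _)
  have : F r (0 + 1) ≤ F r 0 := hF.antitone_col r (Nat.zero_le _) (by omega)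
  have := hF.2.1 ℓ
  have := hF.2.1 r
  omega

theorem basement_lt_of_shapeWithoutOnes_le (hF : IsSSAF n α σ F) (hlr : ℓ < r)
    (hα : α ℓ < α r) (hb : shapeWithoutOnes α F r ≤ shapeWithoutOnes α F ℓ) :
    (σ r : ℕ) < σ ℓ := by
  have := shapeWithoutOnes_le α F ℓ
  have := hF.lt_of_succ_le_of_lt hlr hα (q := shapeWithoutOnes α F r) (by omega) (by
    rw [hF.eq_one_of_shapeWithoutOnes_lt (lt_add_one _) (by omega)]
    exact hF.1 ℓ _ (by omega)) 0 (Nat.zero_le _)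
  have := hF.2.1 ℓ
  have := hF.2.1 r
  omega

theorem sigmaExtendable_shapeWithoutOnes (hF : IsSSAF n α σ F) :
    SigmaExtendable n σ (shapeWithoutOnes α F) α := by
  set b := shapeWithoutOnes α F
  have hb : ∀ i, b i ≤ α i := shapeWithoutOnes_le α F
  have one : ∀ i j, b i < j → j ≤ α i → F i j = 1 := fun i j ↦ hF.eq_one_of_shapeWithoutOnes_lt
  have pos : ∀ i j, j ≤ α i → 1 ≤ F i j := hF.1
  refine ⟨hb, fun ℓ r hlr ↦ ?_⟩
  have := hb ℓ
  have := hb r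
  refine ⟨fun hα hbα ↦ ?_, fun hα hbα ↦ ?_, fun hα hbα ↦ ?_, fun hα hbα ↦ ?_⟩
  · by_contra! h
    have := hF.typeA hlr hα (i := b ℓ) (by omega)
    have := one ℓ (b ℓ + 1) (by omega) (by omega)
    have := one r (b ℓ + 1) (by omega) (by omega)
    have := pos ℓ (b ℓ) (hb ℓ)
    omega
  · by_contra! h
    have := hF.typeB hlr hα (i := b r) h (by omega)
    have := one ℓ (b r) (by omega) h
    have := one r (b r + 1) (by omega) (by omega)
    have := pos r (b r) (hb r)
    omega
  · have hr : α r = b r := by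
      by_contra h
      have := hF.typeA hlr hα (i := b r) (by omega)
      have := one ℓ (b r + 1) (by omega) (by omega)
      have := one r (b r + 1) (by omega) (by omega)
      have := pos ℓ (b r) (by omega)
      omega
    exact ⟨hr, hF.basement_lt_of_shapeWithoutOnes_lt hlr hα hbα⟩
  · have hℓ : α ℓ = b ℓ := by
      by_contra h
      have := hF.typeB hlr hα (i := b ℓ + 1) (by omega) (by omega)
      have := one ℓ (b ℓ + 1) (by omega) (by omega)
      have := one r (b ℓ + 1 + 1) (by omega) (by omega)
      have := pos r (b ℓ + 1) (by omega)
      omega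
    exact ⟨hℓ, hF.basement_lt_of_shapeWithoutOnes_le hlr hα hbα⟩

end IsSSAF

def truncate (β : Fin n → ℕ) (F : Fin n → ℕ → ℕ) : Fin n → ℕ → ℕ :=
  fun i j ↦ if j ≤ β i then F i j else 0

def padWithOnes (α β : Fin n → ℕ) (G : Fin n → ℕ → ℕ) : Fin n → ℕ → ℕ :=
  fun i j ↦ if j ≤ β i then G i j else if j ≤ α i then 1 else 0

/-- Entries of SSAFs are positive, so this says that no cell of shape `β` holds a `1`. -/
def OneFree (β : Fin n → ℕ) (G : Fin n → ℕ → ℕ) : Prop :=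
  ∀ i, ∀ j ∈ Icc 1 (β i), 2 ≤ G i j

instance (β : Fin n → ℕ) (G : Fin n → ℕ → ℕ) : Decidable (OneFree β G) := by
  unfold OneFree; infer_instance

theorem truncate_of_le {i : Fin n} {j : ℕ} (h : j ≤ β i) : truncate β F i j = F i j := if_pos h

theorem padWithOnes_of_le {i : Fin n} {j : ℕ} (h : j ≤ β i) : padWithOnes α β G i j = G i j :=
  if_pos h

theorem padWithOnes_of_lt_of_le {i : Fin n} {j : ℕ} (h1 : β i < j) (h2 : j ≤ α i) :
    padWithOnes α β G i j = 1 := by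
  simp only [padWithOnes, if_neg (Nat.not_le.mpr h1), if_pos h2]

theorem padWithOnes_of_lt {i : Fin n} {j : ℕ} (h : α i < j) (hβα : β i ≤ α i) :
    padWithOnes α β G i j = 0 := by
  simp only [padWithOnes, if_neg (show ¬j ≤ β i by omega), if_neg (Nat.not_le.mpr h)]

theorem oneFree_truncate_shapeWithoutOnes (hF : IsSSAF n α σ F) :
    OneFree (shapeWithoutOnes α F) (truncate (shapeWithoutOnes α F) F) := by
  intro i j hj
  obtain ⟨h1, h2⟩ := mem_Icc.mp hj
  rw [truncate_of_le h2]
  exact hF.two_le_of_le_shapeWithoutOnes h1 h2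

theorem truncate_shapeWithoutOnes_mem (hF : F ∈ SSAFSet n α σ) :
    truncate (shapeWithoutOnes α F) F ∈ SSAFSet n (shapeWithoutOnes α F) σ := by
  obtain ⟨hF, -⟩ := hF
  set b := shapeWithoutOnes α F
  have hb : ∀ i, b i ≤ α i := shapeWithoutOnes_le α F
  refine ⟨⟨fun i j hj ↦ ?_, fun i ↦ ?_, fun i j hj ↦ ?_, fun ℓ r i hlr hbα hi ↦ ?_,
    fun ℓ r i hlr hbα hi hi' ↦ ?_⟩, fun i j hj ↦ if_neg (Nat.not_le.mpr hj)⟩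
  · rw [truncate_of_le hj]
    exact hF.1 i j (hj.trans (hb i))
  · rw [truncate_of_le (Nat.zero_le _)]
    exact hF.2.1 i
  · rw [truncate_of_le hj, truncate_of_le (by omega)]
    exact hF.2.2.1 i j (hj.trans (hb i))
  · rw [truncate_of_le (hi.trans hbα), truncate_of_le hi, truncate_of_le (by omega)]
    have := hb ℓ
    have := hb r
    rcases le_or_gt (α r) (α ℓ) with hα | hα
    · exact hF.2.2.2.1 ℓ r i hlr hα (hi.trans (hb r))
    · have := hF.lt_of_succ_le_of_lt hlr hα (q := b r) (by omega) (by
        rw [hF.eq_one_of_shapeWithoutOnes_lt (by omega : b r < b r + 1) (by omega)]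
        exact hF.1 ℓ (b r) (by omega)) (i + 1) hi
      omega
  · rw [truncate_of_le hi', truncate_of_le hi, truncate_of_le (by omega)]
    have := hb ℓ
    have := hb r
    rcases le_or_gt (α r) (α ℓ) with hα | hα
    · have := hF.lt_succ_of_lt_of_le hlr hα (p := b ℓ) (by omega) (by
        rw [hF.eq_one_of_shapeWithoutOnes_lt (by omega : b ℓ < b ℓ + 1) (by omega)]
        exact hF.two_le_of_le_shapeWithoutOnes (by omega) hbα) i hi
      omega
    · exact hF.2.2.2.2 ℓ r i hlr hα (hi.trans (hb ℓ)) (hi'.trans (hb r))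

section padWithOnes

variable {ℓ r : Fin n} {i : ℕ}

theorem padWithOnes_typeA (hext : SigmaExtendable n σ β α) (hG : IsSSAF n β σ G)
    (hG2 : OneFree β G) (hlr : ℓ < r) (hα : α r ≤ α ℓ) (hi : i + 1 ≤ α r) :
    ¬ (padWithOnes α β G ℓ (i + 1) ≤ padWithOnes α β G r (i + 1) ∧
      padWithOnes α β G r (i + 1) ≤ padWithOnes α β G ℓ i) := by
  rintro ⟨h1, h2⟩
  obtain ⟨c1, -, c3, -⟩ := hext.2 ℓ r hlr
  rcases le_or_gt (i + 1) (β r) with hr | hr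
  · rw [padWithOnes_of_le hr] at h1 h2
    have := hG2 r (i + 1) (mem_Icc.mpr ⟨by omega, hr⟩)
    have hiℓ : i ≤ β ℓ := by
      by_contra! h
      rw [padWithOnes_of_lt_of_le h (by omega)] at h2
      omega
    rw [padWithOnes_of_le hiℓ] at h2
    rcases le_or_gt (β r) (β ℓ) with hβ | hβ
    · rw [padWithOnes_of_le (hr.trans hβ)] at h1
      exact hG.2.2.2.1 ℓ r i hlr hβ hr ⟨h1, h2⟩
    · have := (c3 hα hβ).2
      have := hG.lt_succ_of_basement_lt_of_lt hlr hβ (by rw [hG.2.1 ℓ, hG.2.1 r]; omega) i hiℓ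
      omega
  · rw [padWithOnes_of_lt_of_le hr hi] at h1 h2
    rcases le_or_gt (β r) (β ℓ) with hβ | hβ
    · have := c1 hα hβ
      rw [padWithOnes_of_le (hi.trans this)] at h1
      have := hG2 ℓ (i + 1) (mem_Icc.mpr ⟨by omega, by omega⟩)
      omega
    · have := (c3 hα hβ).1
      omega

theorem padWithOnes_typeB (hext : SigmaExtendable n σ β α) (hG : IsSSAF n β σ G)
    (hG2 : OneFree β G) (hlr : ℓ < r) (hα : α ℓ < α r) (hi : i ≤ α ℓ) :
    ¬ (padWithOnes α β G r (i + 1) ≤ padWithOnes α β G ℓ i ∧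
      padWithOnes α β G ℓ i ≤ padWithOnes α β G r i) := by
  rintro ⟨h1, h2⟩
  obtain ⟨-, c2, -, c4⟩ := hext.2 ℓ r hlr
  rcases le_or_gt i (β ℓ) with hℓ | hℓ
  · rw [padWithOnes_of_le hℓ] at h1 h2
    rcases le_or_gt i (β r) with hr | hr
    · rw [padWithOnes_of_le hr] at h2
      rcases le_or_gt (β r) (β ℓ) with hβ | hβ
      · have := (c4 hα hβ).2
        have := hG.lt_of_basement_lt_of_le hlr hβ (by rw [hG.2.1 ℓ, hG.2.1 r]; omega) i hr
        omega
      · rw [padWithOnes_of_le (show i + 1 ≤ β r by omega)] at h1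
        exact hG.2.2.2.2 ℓ r i hlr hβ hℓ (by omega) ⟨h1, h2⟩
    · rw [padWithOnes_of_lt_of_le hr (by omega)] at h2
      have := hG2 ℓ i (mem_Icc.mpr ⟨by omega, hℓ⟩)
      omega
  · rw [padWithOnes_of_lt_of_le hℓ hi] at h1 h2
    rcases le_or_gt (i + 1) (β r) with hr | hr
    · rw [padWithOnes_of_le hr] at h1
      have := hG2 r (i + 1) (mem_Icc.mpr ⟨by omega, hr⟩)
      omega
    · rcases le_or_gt (β r) (β ℓ) with hβ | hβ
      · have := (c4 hα hβ).1
        omega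
      · have := c2 hα hβ
        omega

end padWithOnes

theorem padWithOnes_mem (hext : SigmaExtendable n σ β α) (hG : G ∈ SSAFSet n β σ)
    (hG2 : OneFree β G) : padWithOnes α β G ∈ SSAFSet n α σ := by
  obtain ⟨hG, -⟩ := hG
  have pos : ∀ i j, j ≤ α i → 1 ≤ padWithOnes α β G i j := by
    intro i j hj
    rcases le_or_gt j (β i) with h | h
    · rw [padWithOnes_of_le h]; exact hG.1 i j h
    · rw [padWithOnes_of_lt_of_le h hj]
  refine ⟨⟨pos, fun i ↦ ?_, fun i j hj ↦ ?_,
    fun ℓ r i hlr hα hi ↦ padWithOnes_typeA hext hG hG2 hlr hα hi,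
    fun ℓ r i hlr hα hi _ ↦ padWithOnes_typeB hext hG hG2 hlr hα hi⟩,
    fun i j hj ↦ padWithOnes_of_lt hj (hext.1 i)⟩
  · rw [padWithOnes_of_le (Nat.zero_le _)]
    exact hG.2.1 i
  · rcases le_or_gt (j + 1) (β i) with h | h
    · rw [padWithOnes_of_le h, padWithOnes_of_le (by omega)]
      exact hG.2.2.1 i j h
    · rw [padWithOnes_of_lt_of_le h hj]
      exact pos i j (by omega)

theorem shapeWithoutOnes_padWithOnes (hβα : ∀ i, β i ≤ α i) (hG2 : OneFree β G) :
    shapeWithoutOnes α (padWithOnes α β G) = β := by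
  funext i
  refine Nat.findGreatest_eq_iff.mpr ⟨hβα i, fun h ↦ ?_, fun k hk hkα ↦ ?_⟩
  · rw [padWithOnes_of_le le_rfl]
    exact hG2 i (β i) (mem_Icc.mpr ⟨by omega, le_rfl⟩)
  · rw [padWithOnes_of_lt_of_le hk hkα]
    omega

theorem padWithOnes_truncate_shapeWithoutOnes (hF : F ∈ SSAFSet n α σ) :
    padWithOnes α (shapeWithoutOnes α F) (truncate (shapeWithoutOnes α F) F) = F := by
  funext i j
  rcases le_or_gt j (shapeWithoutOnes α F i) with h | h
  · rw [padWithOnes_of_le h, truncate_of_le h]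
  · rcases le_or_gt j (α i) with h' | h'
    · rw [padWithOnes_of_lt_of_le h h', hF.1.eq_one_of_shapeWithoutOnes_lt h h']
    · rw [padWithOnes_of_lt h' (shapeWithoutOnes_le α F i), hF.2 i j h']

theorem truncate_padWithOnes (hG : G ∈ SSAFSet n β σ) : truncate β (padWithOnes α β G) = G := by
  funext i j
  rcases le_or_gt j (β i) with h | h
  · rw [truncate_of_le h, padWithOnes_of_le h]
  · rw [hG.2 i j h]
    exact if_neg (by omega)

def fillingWeight (α : Fin n → ℕ) (x : ℕ → ℝ) (F : Fin n → ℕ → ℕ) : ℝ :=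
  ∏ i, ∏ j ∈ Icc 1 (α i), x (F i j)

theorem fillingWeight_eq_pow_mul (x : ℕ → ℝ) (hF : F ∈ SSAFSet n α σ) :
    fillingWeight α x F = x 1 ^ (∑ i, α i - ∑ i, shapeWithoutOnes α F i) *
      fillingWeight (shapeWithoutOnes α F) x (truncate (shapeWithoutOnes α F) F) := by
  set b := shapeWithoutOnes α F
  have hIoc : ∀ k, Icc 1 k = Ioc 0 k := fun k ↦ Icc_add_one_left_eq_Ioc 0 k
  have hcol : ∀ i, ∏ j ∈ Icc 1 (α i), x (F i j) =
      x 1 ^ (α i - b i) * ∏ j ∈ Icc 1 (b i), x (truncate b F i j) := by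
    intro i
    rw [hIoc, hIoc, ← prod_Ioc_consecutive _ (Nat.zero_le _) (shapeWithoutOnes_le α F i),
      mul_comm]
    congr 1
    · rw [prod_eq_pow_card fun j hj ↦ by
        rw [hF.1.eq_one_of_shapeWithoutOnes_lt (mem_Ioc.mp hj).1 (mem_Ioc.mp hj).2], Nat.card_Ioc]
    · exact prod_congr rfl fun j hj ↦ by rw [truncate_of_le (mem_Ioc.mp hj).2]
  rw [fillingWeight, prod_congr rfl fun i _ ↦ hcol i, prod_mul_distrib, prod_pow_eq_pow_sum,
    sum_tsub_distrib _ fun i _ ↦ shapeWithoutOnes_le α F i]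
  rfl

theorem fillingWeight_update_one_zero (x : ℕ → ℝ) (hG : IsSSAF n β σ G) :
    fillingWeight β (Function.update x 1 0) G = if OneFree β G then fillingWeight β x G else 0 := by
  split_ifs with h
  · refine prod_congr rfl fun i _ ↦ prod_congr rfl fun j hj ↦ ?_
    exact Function.update_of_ne (by have := h i j hj; omega) _ _
  · obtain ⟨i, j, hj, hlt⟩ : ∃ i, ∃ j ∈ Icc 1 (β i), G i j < 2 := by
      by_contra! h'
      exact h h'
    have : G i j = 1 := by
      have := hG.1 i j (mem_Icc.mp hj).2
      omega
    exact prod_eq_zero (mem_univ i) (prod_eq_zero hj (by rw [this, Function.update_self]))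

theorem le_of_mem_ssafSet (hF : F ∈ SSAFSet n α σ) (i : Fin n) (j : ℕ) : F i j ≤ n := by
  rcases le_or_gt j (α i) with hj | hj
  · have := hF.1.antitone_col i (Nat.zero_le j) hj
    have := hF.1.2.1 i
    have := (σ i).isLt
    omega
  · rw [hF.2 i j hj]
    exact Nat.zero_le n

theorem ssafSet_finite (n : ℕ) (α : Fin n → ℕ) (σ : Equiv.Perm (Fin n)) :
    (SSAFSet n α σ).Finite := by
  set M := ∑ i, α i
  have hαM : ∀ i, α i ≤ M := fun i ↦ single_le_sum (fun _ _ ↦ Nat.zero_le _) (mem_univ i)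
  let cells : (Fin n → ℕ → ℕ) → Fin n × Fin (M + 1) → ℕ := fun F c ↦ F c.1 c.2
  refine Set.Finite.of_finite_image (f := cells)
    ((Set.Finite.pi' fun _ ↦ Set.finite_Iic n).subset ?_) fun F hF F' hF' h ↦ ?_
  · rintro _ ⟨F, hF, rfl⟩ c
    exact le_of_mem_ssafSet hF c.1 c.2
  · funext i j
    rcases le_or_gt j (α i) with hj | hj
    · exact congrFun h (i, ⟨j, by have := hαM i; omega⟩)
    · rw [hF.2 i j hj, hF'.2 i j hj]

theorem sigmaExtendable_finite (n : ℕ) (α : Fin n → ℕ) (σ : Equiv.Perm (Fin n)) :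
    {β : Fin n → ℕ | SigmaExtendable n σ β α}.Finite :=
  (Set.Finite.pi' fun i ↦ Set.finite_Iic (α i)).subset fun _ hβ ↦ hβ.1

noncomputable def ssafFinset (n : ℕ) (α : Fin n → ℕ) (σ : Equiv.Perm (Fin n)) :
    Finset (Fin n → ℕ → ℕ) :=
  (ssafSet_finite n α σ).toFinset

@[simp]
theorem mem_ssafFinset : F ∈ ssafFinset n α σ ↔ F ∈ SSAFSet n α σ :=
  Set.Finite.mem_toFinset _

theorem atomSum_eq_sum (x : ℕ → ℝ) :
    atomSum n α σ x = ∑ F ∈ ssafFinset n α σ, fillingWeight α x F :=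
  finsum_mem_eq_finite_toFinset_sum _ _

theorem atomSum_update_one_zero (x : ℕ → ℝ) :
    atomSum n β σ (Function.update x 1 0) =
      ∑ G ∈ ssafFinset n β σ with OneFree β G, fillingWeight β x G := by
  rw [atomSum_eq_sum, sum_filter]
  exact sum_congr rfl fun G hG ↦ fillingWeight_update_one_zero x (mem_ssafFinset.mp hG).1

theorem sum_shapeWithoutOnes_eq (x : ℕ → ℝ) (hβ : SigmaExtendable n σ β α) :
    ∑ F ∈ ssafFinset n α σ with shapeWithoutOnes α F = β, fillingWeight α x F =
      x 1 ^ (∑ i, α i - ∑ i, β i) *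
        ∑ G ∈ ssafFinset n β σ with OneFree β G, fillingWeight β x G := by
  rw [mul_sum]
  refine sum_nbij' (truncate β) (padWithOnes α β) ?_ ?_ ?_ ?_ ?_ <;>
    simp only [mem_filter, mem_ssafFinset]
  · rintro F ⟨hF, rfl⟩
    exact ⟨truncate_shapeWithoutOnes_mem hF, oneFree_truncate_shapeWithoutOnes hF.1⟩
  · rintro G ⟨hG, hG2⟩
    exact ⟨padWithOnes_mem hβ hG hG2, shapeWithoutOnes_padWithOnes hβ.1 hG2⟩
  · rintro F ⟨hF, rfl⟩
    exact padWithOnes_truncate_shapeWithoutOnes hF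
  · rintro G ⟨hG, -⟩
    exact truncate_padWithOnes hG
  · rintro F ⟨hF, rfl⟩
    exact fillingWeight_eq_pow_mul x hF

theorem stmt10 (n : ℕ) (α : Fin n → ℕ) (σ : Equiv.Perm (Fin n)) (x : ℕ → ℝ) :
    atomSum n α σ x =
      ∑ᶠ β ∈ {β : Fin n → ℕ | SigmaExtendable n σ β α},
        (x 1) ^ ((∑ i, α i) - ∑ i, β i) *
          atomSum n β σ (Function.update x 1 0) := by
  rw [atomSum_eq_sum, finsum_mem_eq_finite_toFinset_sum _ (sigmaExtendable_finite n α σ),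
    ← sum_fiberwise_of_maps_to (g := shapeWithoutOnes α) fun F hF ↦ ?_]
  · refine sum_congr rfl fun β hβ ↦ ?_
    rw [atomSum_update_one_zero,
      sum_shapeWithoutOnes_eq x ((sigmaExtendable_finite n α σ).mem_toFinset.mp hβ)]
  · simpa using (mem_ssafFinset.mp hF).1.sigmaExtendable_shapeWithoutOnes
end
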